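/- arXiv:2401.10120 — 3 statements merged into one kernel-verified Lean document; each statement's English description precedes it below -/
import Mathlib

section
/- Let u* : [0, t_f] → [0,1]^N be an integrable function, and define the piecewise-averaged function u^d(t) = (1/Δt) ∫_{(k−1)Δt}^{kΔt} u*(τ) dτ for t ∈ [(k−1)Δt, kΔt), where Δt = t_f/T. Then for every t ∈ [0, t_f], ‖∫_0^t (u^d(τ) − u*(τ)) dτ‖_∞ ≤ Δt. -/
/-!
Write `c_k` for the average of `u*` over the `k`-th block `[kΔt, (k+1)Δt]`. Since `u^d ≡ c_k`
there, `u^d` and `u*` have the same integral over every block, so `F t = ∫₀ᵗ (u^d - u*)` vanishes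
at every grid point `kΔt`. For `t` in the `k`-th block this leaves
`F t = (t - kΔt) c_k - ∫_{kΔt}^t u*`, a difference of two numbers in `[0, t - kΔt] ⊆ [0, Δt]`
because `0 ≤ u* ≤ 1`.
-/

open MeasureTheory intervalIntegral Set

section

variable {f g : ℝ → ℝ} {a b s c m M : ℝ}

theorem integral_mem_Icc_mul_of_forall_mem_Icc (hab : a ≤ b)
    (hf : IntervalIntegrable f volume a b) (hfm : ∀ x ∈ Icc a b, f x ∈ Icc m M) :
    ∫ x in a..b, f x ∈ Icc ((b - a) * m) ((b - a) * M) := by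
  constructor
  · simpa using integral_mono_on hab intervalIntegrable_const hf fun x hx => (hfm x hx).1
  · simpa using integral_mono_on hab hf intervalIntegrable_const fun x hx => (hfm x hx).2

theorem mem_Icc_of_mul_eq_integral (hab : a < b) (hf : IntervalIntegrable f volume a b)
    (hfm : ∀ x ∈ Icc a b, f x ∈ Icc m M) (hc : (b - a) * c = ∫ x in a..b, f x) :
    c ∈ Icc m M := by
  obtain ⟨hm, hM⟩ := integral_mem_Icc_mul_of_forall_mem_Icc hab.le hf hfm
  rw [← hc] at hm hM
  exact ⟨le_of_mul_le_mul_left hm (sub_pos.2 hab), le_of_mul_le_mul_left hM (sub_pos.2 hab)⟩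

theorem intervalIntegrable_of_eqOn_Ioo_const (has : a ≤ s)
    (hg : EqOn g (fun _ => c) (Ioo a s)) : IntervalIntegrable g volume a s :=
  intervalIntegrable_const.congr_uIoo (uIoo_of_le has ▸ hg.symm)

theorem integral_eq_mul_of_eqOn_Ioo_const (has : a ≤ s) (hg : EqOn g (fun _ => c) (Ioo a s)) :
    ∫ x in a..s, g x = (s - a) * c := by
  rw [integral_congr_Ioo_of_le has hg, intervalIntegral.integral_const, smul_eq_mul]

theorem integral_sub_eq_mul_sub_of_eqOn_Ioo_const (has : a ≤ s)
    (hg : EqOn g (fun _ => c) (Ioo a s)) (hf : IntervalIntegrable f volume a s) :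
    ∫ x in a..s, (g x - f x) = (s - a) * c - ∫ x in a..s, f x := by
  rw [integral_sub (intervalIntegrable_of_eqOn_Ioo_const has hg) hf,
    integral_eq_mul_of_eqOn_Ioo_const has hg]

theorem integral_sub_eq_zero_of_eqOn_Ioo_const (hab : a ≤ b)
    (hg : EqOn g (fun _ => c) (Ioo a b)) (hf : IntervalIntegrable f volume a b)
    (hc : (b - a) * c = ∫ x in a..b, f x) : ∫ x in a..b, (g x - f x) = 0 := by
  rw [integral_sub_eq_mul_sub_of_eqOn_Ioo_const hab hg hf, hc, sub_self]

theorem abs_integral_sub_le_of_eqOn_Ioo_const (has : a ≤ s)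
    (hg : EqOn g (fun _ => c) (Ioo a s)) (hf : IntervalIntegrable f volume a s)
    (hfm : ∀ x ∈ Icc a s, f x ∈ Icc m M) (hc : c ∈ Icc m M) :
    |∫ x in a..s, (g x - f x)| ≤ (s - a) * (M - m) := by
  have hsa : 0 ≤ s - a := sub_nonneg.2 has
  have hgc : (s - a) * c ∈ Icc ((s - a) * m) ((s - a) * M) :=
    ⟨mul_le_mul_of_nonneg_left hc.1 hsa, mul_le_mul_of_nonneg_left hc.2 hsa⟩
  rw [integral_sub_eq_mul_sub_of_eqOn_Ioo_const has hg hf, mul_sub]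
  exact Real.dist_le_of_mem_Icc hgc (integral_mem_Icc_mul_of_forall_mem_Icc has hf hfm)

end

theorem exists_lt_mem_Icc_mul_of_mem_Icc {T : ℕ} {Δ t : ℝ} (hT : 0 < T) (hΔ : 0 < Δ)
    (ht : t ∈ Icc 0 (T * Δ)) : ∃ k < T, t ∈ Icc (k * Δ) ((k + 1) * Δ) := by
  rcases ht.2.lt_or_eq with hlt | heq
  · refine ⟨⌊t / Δ⌋₊, ?_, ?_, ?_⟩
    · exact (Nat.floor_lt (div_nonneg ht.1 hΔ.le)).2 ((div_lt_iff₀ hΔ).2 hlt)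
    · exact (le_div_iff₀ hΔ).1 (Nat.floor_le (div_nonneg ht.1 hΔ.le))
    · exact ((div_lt_iff₀ hΔ).1 (Nat.lt_floor_add_one _)).le
  · refine ⟨T - 1, Nat.sub_one_lt hT.ne', ?_⟩
    rw [heq, Nat.cast_pred hT, sub_add_cancel]
    exact ⟨by nlinarith, le_rfl⟩

section UniformPartition

variable {f g : ℝ → ℝ} {T k : ℕ} {Δ m M s : ℝ}

noncomputable def blockAverage (f : ℝ → ℝ) (Δ : ℝ) (k : ℕ) : ℝ :=
  1 / Δ * ∫ x in k * Δ..(k + 1) * Δ, f x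

theorem Icc_nat_mul_subset_Icc_zero (hΔ : 0 ≤ Δ) (hk : k < T) :
    Icc (k * Δ) ((k + 1) * Δ) ⊆ Icc 0 (T * Δ) := by
  have hkT : (k : ℝ) + 1 ≤ T := by exact_mod_cast hk
  exact Icc_subset_Icc (by positivity) (mul_le_mul_of_nonneg_right hkT hΔ)

theorem IntervalIntegrable.of_mem_Icc_nat_mul (hf : IntervalIntegrable f volume 0 (T * Δ))
    (hΔ : 0 ≤ Δ) (hk : k < T) (hs : s ∈ Icc (k * Δ) ((k + 1) * Δ)) :
    IntervalIntegrable f volume (k * Δ) s := by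
  have hsub := (Icc_nat_mul_subset_Icc_zero hΔ hk).trans Icc_subset_uIcc
  exact hf.mono_set (uIcc_subset_uIcc (hsub ⟨le_rfl, hs.1.trans hs.2⟩) (hsub hs))

theorem mul_blockAverage_eq_integral (hΔ : Δ ≠ 0) :
    ((k + 1) * Δ - k * Δ) * blockAverage f Δ k = ∫ x in k * Δ..(k + 1) * Δ, f x := by
  rw [blockAverage, show (k + 1) * Δ - k * Δ = Δ by ring]
  field_simp

theorem blockAverage_mem_Icc (hΔ : 0 < Δ) (hk : k < T)
    (hf : IntervalIntegrable f volume 0 (T * Δ)) (hfm : ∀ x ∈ Icc 0 (T * Δ), f x ∈ Icc m M) :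
    blockAverage f Δ k ∈ Icc m M := by
  have hsub := Icc_nat_mul_subset_Icc_zero hΔ.le hk
  refine mem_Icc_of_mul_eq_integral (by nlinarith) ?_ (fun x hx => hfm x (hsub hx)) ?_
  · exact hf.of_mem_Icc_nat_mul hΔ.le hk (right_mem_Icc.2 (by nlinarith))
  · exact mul_blockAverage_eq_integral hΔ.ne'

theorem integral_sub_nat_mul_eq_zero (hΔ : 0 < Δ) (hk : k ≤ T)
    (hf : IntervalIntegrable f volume 0 (T * Δ))
    (hg : ∀ i < T, EqOn g (fun _ => blockAverage f Δ i) (Ico (i * Δ) ((i + 1) * Δ))) :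
    IntervalIntegrable (fun x => g x - f x) volume 0 (k * Δ) ∧
      ∫ x in 0..k * Δ, (g x - f x) = 0 := by
  have hblock : ∀ i < k,
      IntervalIntegrable (fun x => g x - f x) volume (i * Δ) ((i + 1 : ℕ) * Δ) ∧
        ∫ x in i * Δ..(i + 1 : ℕ) * Δ, (g x - f x) = 0 := by
    intro i hi
    have hiT : i < T := hi.trans_le hk
    have hle : (i : ℝ) * Δ ≤ (i + 1) * Δ := by nlinarith
    have hfi := hf.of_mem_Icc_nat_mul hΔ.le hiT (right_mem_Icc.2 hle)
    have hgi := (hg i hiT).mono Ioo_subset_Ico_self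
    push_cast
    exact ⟨(intervalIntegrable_of_eqOn_Ioo_const hle hgi).sub hfi,
      integral_sub_eq_zero_of_eqOn_Ioo_const hle hgi hfi
        (mul_blockAverage_eq_integral hΔ.ne')⟩
  have hsum := sum_integral_adjacent_intervals (a := fun i : ℕ => (i : ℝ) * Δ)
    fun i hi => (hblock i hi).1
  have hint := IntervalIntegrable.trans_iterate (a := fun i : ℕ => (i : ℝ) * Δ)
    fun i hi => (hblock i hi).1
  simp only [Nat.cast_zero, zero_mul] at hsum hint
  refine ⟨hint, ?_⟩
  rw [← hsum, Finset.sum_eq_zero fun i hi => (hblock i (Finset.mem_range.1 hi)).2]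

theorem abs_integral_sub_le_of_eqOn_block_average (hT : 0 < T) (hΔ : 0 < Δ)
    (hf : IntervalIntegrable f volume 0 (T * Δ)) (hfm : ∀ x ∈ Icc 0 (T * Δ), f x ∈ Icc m M)
    (hg : ∀ i < T, EqOn g (fun _ => blockAverage f Δ i) (Ico (i * Δ) ((i + 1) * Δ)))
    {t : ℝ} (ht : t ∈ Icc 0 (T * Δ)) :
    |∫ x in 0..t, (g x - f x)| ≤ Δ * (M - m) := by
  obtain ⟨k, hk, hkt⟩ := exists_lt_mem_Icc_mul_of_mem_Icc hT hΔ ht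
  obtain ⟨hint₀, hzero⟩ := integral_sub_nat_mul_eq_zero hΔ hk.le hf hg
  have hsub := Icc_nat_mul_subset_Icc_zero hΔ.le hk
  have hfkt := hf.of_mem_Icc_nat_mul hΔ.le hk hkt
  have hc := blockAverage_mem_Icc hΔ hk hf hfm
  have hgc := (hg k hk).mono (Ioo_subset_Ico_self.trans (Ico_subset_Ico_right hkt.2))
  have hint₁ := (intervalIntegrable_of_eqOn_Ioo_const hkt.1 hgc).sub hfkt
  rw [← integral_add_adjacent_intervals hint₀ hint₁, hzero, zero_add]
  calc |∫ x in k * Δ..t, (g x - f x)| ≤ (t - k * Δ) * (M - m) :=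
        abs_integral_sub_le_of_eqOn_Ioo_const hkt.1 hgc hfkt
          (fun x hx => hfm x (hsub ⟨hx.1, hx.2.trans hkt.2⟩)) hc
    _ ≤ Δ * (M - m) :=
        mul_le_mul_of_nonneg_right (by linarith [hkt.2]) (sub_nonneg.2 (hc.1.trans hc.2))

end UniformPartition

/-- For an integrable control `u* : [0,t_f] → [0,1]^N` and its piecewise
interval-average `u^d`, the cumulative difference satisfies
`‖∫_0^t (u^d − u*)‖_∞ ≤ Δt` for all `t ∈ [0, t_f]`. -/
theorem piecewise_average_cumulative_diff_le_dt
    (N T : ℕ) (hT : 0 < T) (tf : ℝ) (htf : 0 < tf)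
    (Δt : ℝ) (hΔt : Δt = tf / T)
    (ustar ud : ℝ → Fin N → ℝ)
    (hbound : ∀ t ∈ Set.Icc (0 : ℝ) tf, ∀ j, ustar t j ∈ Set.Icc (0 : ℝ) 1)
    (hint : ∀ j, IntervalIntegrable (fun τ => ustar τ j) volume 0 tf)
    (hud : ∀ k : ℕ, k < T →
      ∀ t ∈ Set.Ico ((k : ℝ) * Δt) (((k : ℝ) + 1) * Δt), ∀ j,
        ud t j = (1 / Δt) * ∫ τ in ((k : ℝ) * Δt)..(((k : ℝ) + 1) * Δt), ustar τ j) :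
    ∀ t ∈ Set.Icc (0 : ℝ) tf, ∀ j,
      |∫ τ in (0 : ℝ)..t, (ud τ j - ustar τ j)| ≤ Δt := by
  intro t ht j
  have hΔ : 0 < Δt := by rw [hΔt]; positivity
  have hTΔ : (T : ℝ) * Δt = tf := by rw [hΔt]; field_simp
  rw [← hTΔ] at hbound hint ht
  simpa using abs_integral_sub_le_of_eqOn_block_average hT hΔ (hint j)
    (fun x hx => hbound x hx j) (fun k hk x hx => hud k hk x hx j) ht
end

section
/- If u* : [0, t_f] → [0,1]^N is continuous on each interval [(k−1)Δt, kΔt] (uniformly continuous overall), then ‖∫_0^t (u^d(τ) − u*(τ)) dτ‖_∞ ≤ ω(Δt)·Δt for all t ∈ [0, t_f], where ω is a modulus of continuity of u*; in particular the cumulative difference is o(Δt)·Δt as Δt → 0. -/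
/-!
Over a full cell `[kΔt, (k+1)Δt]` the average `u^d` and `u*` have the same integral, so the
cumulative difference up to `t` is the integral of `u^d - u*` over the part `[kΔt, t]` of the cell
containing `t`. There `u^d` is a mean value of `u*` over the cell, so it differs from `u*` by at
most the oscillation `ω(Δt)` of `u*` on the cell, and the part has length at most `Δt`.
-/

open MeasureTheory intervalIntegral Set

noncomputable def cellAverage (f : ℝ → ℝ) (h : ℝ) (k : ℕ) : ℝ :=
  (1 / h) * ∫ τ in (k * h)..((k + 1) * h), f τ

variable {f g : ℝ → ℝ} {h C : ℝ} {k n : ℕ}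

lemma cell_subset_Icc (hh : 0 ≤ h) (hk : k < n) :
    Icc ((k : ℝ) * h) ((k + 1) * h) ⊆ Icc 0 (n * h) :=
  Icc_subset_Icc (by positivity) (by gcongr; exact_mod_cast hk)

lemma exists_lt_mem_cell (hh : 0 < h) (hn : 0 < n) {t : ℝ} (ht : t ∈ Icc 0 (n * h)) :
    ∃ k < n, t ∈ Icc ((k : ℝ) * h) ((k + 1) * h) := by
  rcases ht.2.lt_or_eq with hlt | rfl
  · have ht_div : 0 ≤ t / h := div_nonneg ht.1 hh.le
    refine ⟨⌊t / h⌋₊, (Nat.floor_lt ht_div).2 ((div_lt_iff₀ hh).2 hlt), ?_, ?_⟩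
    · exact (le_div_iff₀ hh).1 (Nat.floor_le ht_div)
    · exact (div_le_iff₀ hh).1 (Nat.lt_floor_add_one _).le
  · refine ⟨n - 1, Nat.sub_lt hn one_pos, ?_⟩
    rw [Nat.cast_pred hn, sub_add_cancel]
    exact ⟨by gcongr; linarith, le_rfl⟩

lemma eqOn_sub_cellAverage (hg : EqOn g (fun _ => cellAverage f h k) (Ico (k * h) ((k + 1) * h)))
    {a b : ℝ} (ha : k * h ≤ a) (hab : a ≤ b) (hb : b ≤ (k + 1) * h) :
    EqOn (fun x => g x - f x) (fun x => cellAverage f h k - f x) (uIoo a b) := by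
  rw [uIoo_of_le hab]
  intro x hx
  simp only [hg ⟨ha.trans hx.1.le, hx.2.trans_le hb⟩]

lemma intervalIntegrable_sub_of_eqOn_cellAverage
    (hf : IntervalIntegrable f volume (k * h) ((k + 1) * h))
    (hg : EqOn g (fun _ => cellAverage f h k) (Ico (k * h) ((k + 1) * h)))
    {a b : ℝ} (ha : k * h ≤ a) (hab : a ≤ b) (hb : b ≤ (k + 1) * h) :
    IntervalIntegrable (fun x => g x - f x) volume a b :=
  (intervalIntegrable_const.sub (hf.mono_set (uIcc_subset_uIcc
    (Icc_subset_uIcc ⟨ha, hab.trans hb⟩) (Icc_subset_uIcc ⟨ha.trans hab, hb⟩)))).congr_uIoo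
    (eqOn_sub_cellAverage hg ha hab hb).symm

lemma integral_cellAverage_sub_eq_zero (hh : h ≠ 0)
    (hf : IntervalIntegrable f volume (k * h) ((k + 1) * h)) :
    ∫ x in (k * h)..((k + 1) * h), (cellAverage f h k - f x) = 0 := by
  rw [integral_sub intervalIntegrable_const hf, intervalIntegral.integral_const, smul_eq_mul,
    cellAverage]
  field_simp
  ring

lemma abs_cellAverage_sub_le (hh : 0 < h)
    (hf : IntervalIntegrable f volume (k * h) ((k + 1) * h))
    (hosc : ∀ s ∈ Icc ((k : ℝ) * h) ((k + 1) * h), ∀ t ∈ Icc ((k : ℝ) * h) ((k + 1) * h),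
      |f t - f s| ≤ C)
    {x : ℝ} (hx : x ∈ Icc ((k : ℝ) * h) ((k + 1) * h)) :
    |cellAverage f h k - f x| ≤ C := by
  have hlen : ((k : ℝ) + 1) * h - k * h = h := by ring
  have hint : |∫ s in (k * h)..((k + 1) * h), (f s - f x)| ≤ C * h := calc
    _ ≤ C * |((k : ℝ) + 1) * h - k * h| := by
      refine norm_integral_le_of_norm_le_const (E := ℝ) fun s hs => ?_
      rw [uIoc_of_le (by linarith)] at hs
      exact hosc x hx s (Ioc_subset_Icc_self hs)
    _ = C * h := by rw [hlen, abs_of_pos hh]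
  have hdiff : cellAverage f h k - f x = (1 / h) * ∫ s in (k * h)..((k + 1) * h), (f s - f x) := by
    rw [integral_sub hf intervalIntegrable_const, intervalIntegral.integral_const, hlen,
      smul_eq_mul, cellAverage]
    field_simp
  calc |cellAverage f h k - f x|
      = (1 / h) * |∫ s in (k * h)..((k + 1) * h), (f s - f x)| := by
        rw [hdiff, abs_mul, abs_of_pos (one_div_pos.2 hh)]
    _ ≤ (1 / h) * (C * h) := by gcongr
    _ = C := by field_simp

lemma abs_integral_cellAverage_sub_le (hh : 0 < h)
    (hf : IntervalIntegrable f volume (k * h) ((k + 1) * h))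
    (hosc : ∀ s ∈ Icc ((k : ℝ) * h) ((k + 1) * h), ∀ t ∈ Icc ((k : ℝ) * h) ((k + 1) * h),
      |f t - f s| ≤ C)
    {t : ℝ} (ht : t ∈ Icc ((k : ℝ) * h) ((k + 1) * h)) :
    |∫ x in (k * h)..t, (cellAverage f h k - f x)| ≤ C * h := by
  have hC : 0 ≤ C := (abs_nonneg _).trans (abs_cellAverage_sub_le hh hf hosc ht)
  calc |∫ x in (k * h)..t, (cellAverage f h k - f x)|
      ≤ C * |t - k * h| := by
        refine norm_integral_le_of_norm_le_const (E := ℝ) fun x hx => ?_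
        rw [uIoc_of_le ht.1] at hx
        exact abs_cellAverage_sub_le hh hf hosc ⟨hx.1.le, hx.2.trans ht.2⟩
    _ ≤ C * h := by
        gcongr
        rw [abs_of_nonneg (sub_nonneg.2 ht.1)]
        linarith [ht.2]

theorem abs_integral_sub_le_of_eqOn_cellAverage (hh : 0 < h) (hn : 0 < n)
    (hf : ∀ k < n, IntervalIntegrable f volume (k * h) ((k + 1) * h))
    (hg : ∀ k < n, EqOn g (fun _ => cellAverage f h k) (Ico (k * h) ((k + 1) * h)))
    (hosc : ∀ k < n, ∀ s ∈ Icc ((k : ℝ) * h) ((k + 1) * h),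
      ∀ t ∈ Icc ((k : ℝ) * h) ((k + 1) * h), |f t - f s| ≤ C)
    {t : ℝ} (ht : t ∈ Icc 0 (n * h)) :
    |∫ x in (0 : ℝ)..t, (g x - f x)| ≤ C * h := by
  obtain ⟨k, hk, hkt⟩ := exists_lt_mem_cell hh hn ht
  have hcell_le : ∀ i : ℕ, (i : ℝ) * h ≤ (i + 1) * h := fun i => by linarith
  have hcells : ∀ i < k, IntervalIntegrable (fun x => g x - f x) volume
      ((fun i : ℕ => (i : ℝ) * h) i) ((fun i : ℕ => (i : ℝ) * h) (i + 1)) := fun i hi => by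
    simpa only [Nat.cast_succ] using intervalIntegrable_sub_of_eqOn_cellAverage
      (hf i (hi.trans hk)) (hg i (hi.trans hk)) le_rfl (hcell_le i) le_rfl
  have hinit_zero : ∫ x in (0 : ℝ)..k * h, (g x - f x) = 0 := by
    have hsum := sum_integral_adjacent_intervals hcells
    simp only [Nat.cast_zero, zero_mul, Nat.cast_succ] at hsum
    rw [← hsum]
    refine Finset.sum_eq_zero fun i hi => ?_
    have hin : i < n := (Finset.mem_range.1 hi).trans hk
    rw [integral_congr_uIoo (eqOn_sub_cellAverage (hg i hin) le_rfl (hcell_le i) le_rfl)]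
    exact integral_cellAverage_sub_eq_zero hh.ne' (hf i hin)
  have hinit : IntervalIntegrable (fun x => g x - f x) volume 0 (k * h) := by
    simpa using IntervalIntegrable.trans_iterate hcells
  rw [← integral_add_adjacent_intervals hinit
      (intervalIntegrable_sub_of_eqOn_cellAverage (hf k hk) (hg k hk) le_rfl hkt.1 hkt.2),
    hinit_zero, zero_add, integral_congr_uIoo (eqOn_sub_cellAverage (hg k hk) le_rfl hkt.1 hkt.2)]
  exact abs_integral_cellAverage_sub_le hh (hf k hk) (hosc k hk) hkt

theorem piecewise_average_cumulative_diff_le_modulus_general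
    (N T : ℕ) (hT : 0 < T) (tf : ℝ) (htf : 0 < tf)
    (Δt : ℝ) (hΔt : Δt = tf / T)
    (ustar ud : ℝ → Fin N → ℝ)
    (hcont : ∀ j, ContinuousOn (fun τ => ustar τ j) (Set.Icc (0 : ℝ) tf))
    (ω : ℝ → ℝ)
    (hmod : ∀ δ : ℝ, 0 ≤ δ → ∀ s ∈ Set.Icc (0 : ℝ) tf, ∀ t ∈ Set.Icc (0 : ℝ) tf,
      |t - s| ≤ δ → ∀ j, |ustar t j - ustar s j| ≤ ω δ)
    (hud : ∀ k : ℕ, k < T →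
      ∀ t ∈ Set.Ico ((k : ℝ) * Δt) (((k : ℝ) + 1) * Δt), ∀ j,
        ud t j = (1 / Δt) * ∫ τ in ((k : ℝ) * Δt)..(((k : ℝ) + 1) * Δt), ustar τ j) :
    ∀ t ∈ Set.Icc (0 : ℝ) tf, ∀ j,
      |∫ τ in (0 : ℝ)..t, (ud τ j - ustar τ j)| ≤ ω Δt * Δt := by
  intro t ht j
  have hΔt_pos : 0 < Δt := by rw [hΔt]; positivity
  obtain rfl : tf = T * Δt := by rw [hΔt]; field_simp
  have hcell : ∀ k < T, Icc ((k : ℝ) * Δt) ((k + 1) * Δt) ⊆ Icc 0 (T * Δt) :=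
    fun k hk => cell_subset_Icc hΔt_pos.le hk
  refine abs_integral_sub_le_of_eqOn_cellAverage hΔt_pos hT (fun k hk => ?_)
    (fun k hk s hs => hud k hk s hs j) (fun k hk s hs t ht => ?_) ht
  · refine ((hcont j).mono ?_).intervalIntegrable
    rw [uIcc_of_le (by linarith)]
    exact hcell k hk
  · refine hmod Δt hΔt_pos.le s (hcell k hk hs) t (hcell k hk ht) ?_ j
    simpa [← Real.dist_eq, add_mul] using Real.dist_le_of_mem_Icc ht hs

/-- If `u*` is (uniformly) continuous with modulus of continuity `ω`, then the
cumulative difference with its piecewise interval-average `u^d` is bounded by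
`ω(Δt)·Δt`, i.e. `o(Δt)·Δt` as `Δt → 0`. -/
theorem piecewise_average_cumulative_diff_le_modulus
    (N T : ℕ) (hT : 0 < T) (tf : ℝ) (htf : 0 < tf)
    (Δt : ℝ) (hΔt : Δt = tf / T)
    (ustar ud : ℝ → Fin N → ℝ)
    (hbound : ∀ t ∈ Set.Icc (0 : ℝ) tf, ∀ j, ustar t j ∈ Set.Icc (0 : ℝ) 1)
    (hcont : ∀ j, ContinuousOn (fun τ => ustar τ j) (Set.Icc (0 : ℝ) tf))
    (ω : ℝ → ℝ)
    (hmod : ∀ δ : ℝ, 0 ≤ δ → ∀ s ∈ Set.Icc (0 : ℝ) tf, ∀ t ∈ Set.Icc (0 : ℝ) tf,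
      |t - s| ≤ δ → ∀ j, |ustar t j - ustar s j| ≤ ω δ)
    (hud : ∀ k : ℕ, k < T →
      ∀ t ∈ Set.Ico ((k : ℝ) * Δt) (((k : ℝ) + 1) * Δt), ∀ j,
        ud t j = (1 / Δt) * ∫ τ in ((k : ℝ) * Δt)..(((k : ℝ) + 1) * Δt), ustar τ j) :
    ∀ t ∈ Set.Icc (0 : ℝ) tf, ∀ j,
      |∫ τ in (0 : ℝ)..t, (ud τ j - ustar τ j)| ≤ ω Δt * Δt :=
  piecewise_average_cumulative_diff_le_modulus_general N T hT tf htf Δt hΔt ustar ud hcont ω hmod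
    hud
end

section
/- Sum-up rounding preserves cumulative control: let u^con ∈ [0,1]^{N×T} satisfy Σ_j u^con_{jk} = 1 for every k, and let u^bin ∈ {0,1}^{N×T} be produced by the sum-up rounding rule (at each step k, set u^bin_{j*k} = 1 for j* maximizing the cumulative deviation δ_{jk} = Σ_{τ≤k} u^con_{jτ}Δt − Σ_{τ<k} u^bin_{jτ}Δt, and 0 otherwise). Then for every k and j, |Σ_{τ=1}^k (u^con_{jτ} − u^bin_{jτ})Δt| ≤ (N−1)Δt. -/
open Finset

/-- Sum-up rounding preserves cumulative control: if `u^con ∈ [0,1]^{N×T}`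
satisfies the SOS1 property and `u^bin` is produced by the sum-up rounding rule
(ties broken by smallest index), then the cumulative deviation between `u^con`
and `u^bin` is at most `(N−1)Δt`. -/
theorem sum_up_rounding_cumulative_bound
    (N T : ℕ) (hN : 1 ≤ N) (Δt : ℝ) (hΔt : 0 < Δt)
    (ucon ubin : Fin N → ℕ → ℝ)
    (hbox : ∀ j, ∀ k < T, ucon j k ∈ Set.Icc (0 : ℝ) 1)
    (hsos1 : ∀ k < T, ∑ j : Fin N, ucon j k = 1)
    (δ : Fin N → ℕ → ℝ)
    (hδ : ∀ j, ∀ k < T,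
      δ j k = (∑ τ ∈ Finset.range (k + 1), ucon j τ) * Δt -
              (∑ τ ∈ Finset.range k, ubin j τ) * Δt)
    (hrule : ∀ k < T, ∃ jstar : Fin N,
      (∀ j : Fin N, δ j k ≤ δ jstar k) ∧
      (∀ j : Fin N, δ j k = δ jstar k → jstar ≤ j) ∧
      ubin jstar k = 1 ∧ ∀ j : Fin N, j ≠ jstar → ubin j k = 0) :
    ∀ k ≤ T, ∀ j : Fin N,
      |∑ τ ∈ Finset.range k, (ucon j τ - ubin j τ) * Δt| ≤ ((N : ℝ) - 1) * Δt := by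
  set S : Fin N → ℕ → ℝ := fun j k => ∑ τ ∈ Finset.range k, (ucon j τ - ubin j τ) * Δt
    with hSdef
  have hNpos : (0:ℝ) < (N:ℝ) := by exact_mod_cast hN
  -- sum of ubin over j is 1 for each step
  have hubin : ∀ τ < T, ∑ j : Fin N, ubin j τ = 1 := by
    intro τ hτ
    obtain ⟨js, _, _, h1, h0⟩ := hrule τ hτ
    rw [Fintype.sum_eq_single js (fun b hb => h0 b hb)]
    exact h1
  -- deviations sum to zero
  have hsum : ∀ k ≤ T, ∑ j : Fin N, S j k = 0 := by
    intro k hk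
    rw [hSdef]
    rw [Finset.sum_comm]
    refine Finset.sum_eq_zero fun τ hτ => ?_
    have hτT : τ < T := lt_of_lt_of_le (Finset.mem_range.mp hτ) hk
    rw [← Finset.sum_mul, Finset.sum_sub_distrib, hsos1 τ hτT, hubin τ hτT]
    ring
  -- δ in terms of S
  have hdelta : ∀ k < T, ∀ j, δ j k = S j k + ucon j k * Δt := by
    intro k hk j
    have hs : S j k = (∑ τ ∈ Finset.range k, ucon j τ) * Δt -
        (∑ τ ∈ Finset.range k, ubin j τ) * Δt := by
      rw [hSdef]
      simp only [sub_mul]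
      rw [Finset.sum_sub_distrib, Finset.sum_mul, Finset.sum_mul]
    rw [hδ j k hk, hs, Finset.sum_range_succ]
    ring
  -- lower bound by induction
  have hlow : ∀ k ≤ T, ∀ j : Fin N, -(((N:ℝ) - 1) / N * Δt) ≤ S j k := by
    intro k
    induction k with
    | zero =>
      intro _ j
      simp only [hSdef, Finset.range_zero, Finset.sum_empty]
      have : (0:ℝ) ≤ ((N:ℝ) - 1) / N * Δt := by
        apply mul_nonneg (div_nonneg (by linarith [hNpos, (by exact_mod_cast hN : (1:ℝ) ≤ N)]) hNpos.le) hΔt.le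
      linarith
    | succ k ih =>
      intro hk j
      have hkT : k < T := hk
      have IH := ih (le_of_lt hkT)
      obtain ⟨js, hmax, _, h1, h0⟩ := hrule k hkT
      have hstep : ∀ i : Fin N, S i (k+1) = S i k + (ucon i k - ubin i k) * Δt := by
        intro i; exact Finset.sum_range_succ (fun τ => (ucon i τ - ubin i τ) * Δt) k
      -- sum of δ over i is Δt
      have hδsum : ∑ i : Fin N, δ i k = Δt := by
        have : ∑ i : Fin N, δ i k = ∑ i : Fin N, (S i k + ucon i k * Δt) :=
          Finset.sum_congr rfl fun i _ => hdelta k hkT i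
        rw [this, Finset.sum_add_distrib, hsum k (le_of_lt hkT), ← Finset.sum_mul,
          hsos1 k hkT]
        ring
      have hjs : Δt / N ≤ δ js k := by
        have hcard : ∑ i : Fin N, δ i k ≤ (Finset.univ.card : ℕ) • δ js k :=
          Finset.sum_le_card_nsmul _ _ _ (fun i _ => hmax i)
        simp only [Finset.card_univ, Fintype.card_fin, nsmul_eq_mul] at hcard
        rw [hδsum] at hcard
        rw [div_le_iff₀ hNpos]
        linarith
      by_cases hjjs : j = js
      · subst hjjs
        rw [hstep j, show S j k + (ucon j k - ubin j k) * Δt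
            = (S j k + ucon j k * Δt) - ubin j k * Δt by ring,
          ← hdelta k hkT j, h1]
        have : Δt / N ≤ δ j k := hjs
        have h2 : Δt / N - Δt = -(((N:ℝ) - 1) / N * Δt) := by
          field_simp; ring
        linarith
      · rw [hstep j, h0 j hjjs]
        have hu := (hbox j k hkT).1
        have := IH j
        nlinarith
  -- conclude
  intro k hk j
  have hlo := hlow k hk j
  have hN1 : (1:ℝ) ≤ (N:ℝ) := by exact_mod_cast hN
  have hfrac : ((N:ℝ) - 1) / N ≤ (N:ℝ) - 1 := by
    rw [div_le_iff₀ hNpos]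
    nlinarith
  have hlo' : -(((N:ℝ) - 1) * Δt) ≤ S j k := by
    have : ((N:ℝ) - 1) / N * Δt ≤ ((N:ℝ) - 1) * Δt :=
      mul_le_mul_of_nonneg_right hfrac hΔt.le
    linarith
  -- upper bound from sum zero
  have hsplit : S j k = -∑ i ∈ Finset.univ.erase j, S i k := by
    have h := hsum k hk
    rw [← Finset.add_sum_erase _ _ (Finset.mem_univ j)] at h
    linarith
  have hcard : (Finset.univ.erase j).card = N - 1 := by
    rw [Finset.card_erase_of_mem (Finset.mem_univ j), Finset.card_univ, Fintype.card_fin]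
  have hup : S j k ≤ ((N:ℝ) - 1) * Δt := by
    have hsum_lo : (Finset.univ.erase j).card • (-(((N:ℝ) - 1) / N * Δt))
        ≤ ∑ i ∈ Finset.univ.erase j, S i k :=
      Finset.card_nsmul_le_sum _ _ _ (fun i _ => hlow k hk i)
    have hNcast : ((N - 1 : ℕ) : ℝ) = (N:ℝ) - 1 := by
      have := Nat.cast_sub hN (R := ℝ); simpa using this
    rw [hcard, nsmul_eq_mul, hNcast] at hsum_lo
    rw [hsplit]
    have : -((N:ℝ) - 1) * (-(((N:ℝ) - 1) / N * Δt)) ≤ ((N:ℝ) - 1) * Δt := by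
      have h1 : ((N:ℝ) - 1) * (((N:ℝ) - 1) / N * Δt) = ((N:ℝ) - 1) / N * (((N:ℝ) - 1) * Δt) := by
        ring
      have h2 : ((N:ℝ) - 1) / N ≤ 1 := by
        rw [div_le_one hNpos]; linarith
      nlinarith [mul_nonneg (by linarith : (0:ℝ) ≤ (N:ℝ) - 1) hΔt.le]
    nlinarith [hsum_lo]
  rw [abs_le]
  exact ⟨by linarith, hup⟩
end
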